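/- With ι : H → K^{op} ⊗ H, h ↦ Σ σ_r(S^{-1}(h₂)) ⊗ h₁ and π : K^{op} ⊗ H → K^{op}, k ⊗ h ↦ k σ_r(h), the image of ι equals the space of coinvariants { x ∈ K^{op} ⊗ H : Σ x₁ ⊗ π(x₂) = x ⊗ 1_{K^{op}} } of the right K^{op}-comodule structure (id ⊗ π)∘Δ on K^{op} ⊗ H. -/

import Mathlib

open TensorProduct LinearMap Coalgebra Module

noncomputable section

variable (k : Type) [Field k]

/-- Convolution product of two linear functionals on a coalgebra. -/
def fconv (C : Type) [AddCommGroup C] [Module k C] [Coalgebra k C]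
    (f g : C →ₗ[k] k) : C →ₗ[k] k :=
  LinearMap.mul' k k ∘ₗ TensorProduct.map f g ∘ₗ Coalgebra.comul

/-- The comultiplication of the dual coalgebra of a finite-dimensional algebra. -/
def dcomul (K : Type) [Ring K] [Algebra k K] [Module.Finite k K] :
    Module.Dual k K →ₗ[k] Module.Dual k K ⊗[k] Module.Dual k K :=
  (TensorProduct.dualDistribEquiv k K K).symm.toLinearMap ∘ₗ (LinearMap.mul' k K).dualMap

variable (K H : Type) [Ring K] [Ring H] [HopfAlgebra k K] [HopfAlgebra k H]
  [Module.Finite k K] [Module.Finite k H]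

/-- The map `σ_r : H → K` induced by a pairing `σ : K* ⊗ H → k` (curried as `σ : K* → H*`),
via the canonical identification `K ≅ K**`. -/
def sigmaR (σ : Module.Dual k K →ₗ[k] Module.Dual k H) : H →ₗ[k] K :=
  (Module.evalEquiv k K).symm.toLinearMap ∘ₗ σ.flip

/-- The opposite multiplication of `K`, i.e. the multiplication of `K^{op}`
(`k ⊗ k' ↦ k' * k`), on the underlying space `K`. -/
def opMul : K ⊗[k] K →ₗ[k] K :=
  LinearMap.mul' k K ∘ₗ (TensorProduct.comm k K K).toLinearMap

/-- The multiplication of the tensor product algebra `K^{op} ⊗ H`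
(on the underlying space `K ⊗ H`). -/
def mulB : (K ⊗[k] H) ⊗[k] (K ⊗[k] H) →ₗ[k] K ⊗[k] H :=
  TensorProduct.map (opMul k K) (LinearMap.mul' k H)
    ∘ₗ (TensorProduct.tensorTensorTensorComm k K H K H).toLinearMap

/-- The unit of `K^{op} ⊗ H`. -/
def oneB : K ⊗[k] H := (1 : K) ⊗ₜ[k] (1 : H)

/-- The comultiplication of the tensor product coalgebra `K^{op} ⊗ H`
(`K^{op}` has the same comultiplication as `K`). -/
def comulB : K ⊗[k] H →ₗ[k] (K ⊗[k] H) ⊗[k] (K ⊗[k] H) :=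
  (TensorProduct.tensorTensorTensorComm k K K H H).toLinearMap
    ∘ₗ TensorProduct.map Coalgebra.comul Coalgebra.comul

/-- The counit of the coalgebra `K^{op} ⊗ H`. -/
def epsB : K ⊗[k] H →ₗ[k] k :=
  LinearMap.mul' k k ∘ₗ
    TensorProduct.map (Coalgebra.counit (R := k) (A := K)) (Coalgebra.counit (R := k) (A := H))

/-- The coaction `ρ : H → (K^{op} ⊗ H) ⊗ H`, `h ↦ Σ (σ_r(S⁻¹(h₍₃₎)) ⊗ h₍₁₎) ⊗ h₍₂₎`. -/
def rhoH (σ : Module.Dual k K →ₗ[k] Module.Dual k H) (Sinv : H →ₗ[k] H) :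
    H →ₗ[k] (K ⊗[k] H) ⊗[k] H :=
  (TensorProduct.assoc k K H H).symm.toLinearMap
    ∘ₗ TensorProduct.map (sigmaR k K H σ ∘ₗ Sinv) .id
    ∘ₗ (TensorProduct.comm k (H ⊗[k] H) H).toLinearMap
    ∘ₗ TensorProduct.map Coalgebra.comul .id ∘ₗ Coalgebra.comul

/-- The right `K^{op} ⊗ H`-action on `K^{op}`:
`l ⊗ (κ ⊗ h) ↦ κ l σ_r(h)`, where the product is written in `K`
(i.e. the element `κ * l * σ_r(h)` of `K`). -/
def actK (σ : Module.Dual k K →ₗ[k] Module.Dual k H) :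
    K ⊗[k] (K ⊗[k] H) →ₗ[k] K :=
  LinearMap.mul' k K
    ∘ₗ TensorProduct.map (LinearMap.mul' k K ∘ₗ (TensorProduct.comm k K K).toLinearMap) .id
    ∘ₗ (TensorProduct.assoc k K K K).symm.toLinearMap
    ∘ₗ TensorProduct.map .id (TensorProduct.map .id (sigmaR k K H σ))

/-- The map `ι : H → K^{op} ⊗ H`, `h ↦ Σ σ_r(S⁻¹(h₍₂₎)) ⊗ h₍₁₎`. -/
def iotaH (σ : Module.Dual k K →ₗ[k] Module.Dual k H) (Sinv : H →ₗ[k] H) :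
    H →ₗ[k] K ⊗[k] H :=
  TensorProduct.map (sigmaR k K H σ ∘ₗ Sinv) .id
    ∘ₗ (TensorProduct.comm k H H).toLinearMap ∘ₗ Coalgebra.comul

/-- The map `π : K^{op} ⊗ H → K^{op}`, `κ ⊗ h ↦ κ σ_r(h)` (product written in `K`). -/
def piB (σ : Module.Dual k K →ₗ[k] Module.Dual k H) : K ⊗[k] H →ₗ[k] K :=
  LinearMap.mul' k K ∘ₗ TensorProduct.map .id (sigmaR k K H σ)


/-!
`σ_r` is an algebra and a coalgebra map, and `S⁻¹` reverses the coproduct, because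
`Δ ∘ S` and `(S ⊗ S) ∘ τ ∘ Δ` are both convolution inverses of `Δ`. Hence
`(id ⊗ π) (Δ (ι h)) = Σ (σ_r(S⁻¹ h₄) ⊗ h₁) ⊗ σ_r(S⁻¹(h₃) h₂)`, and by coassociativity the middle
legs merge into `Σ S⁻¹(m₂) m₁ = ε(m)`, so `ι h` is coinvariant. Conversely the map
`G ((κ ⊗ h) ⊗ l) = ε(κ) ι(h) (l ⊗ 1)` satisfies `G ∘ (id ⊗ π) ∘ Δ = id` and `G (y ⊗ 1) ∈ im ι`,
so a coinvariant `x = G (x ⊗ 1)` lies in the image of `ι`.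
-/

namespace Coalgebra

variable {R C : Type*} [CommSemiring R] [AddCommMonoid C] [Module R C] [Coalgebra R C]

/- The counit law in the shape left behind by `coassoc_simps`. -/
lemma map_counit_comp_assoc_comp_map_comul {M N P Q : Type*} [AddCommMonoid M] [Module R M]
    [AddCommMonoid N] [Module R N] [AddCommMonoid P] [Module R P] [AddCommMonoid Q] [Module R Q]
    (e : R →ₗ[R] N) (f : C ⊗[R] M →ₗ[R] P) (g : Q →ₗ[R] C ⊗[R] M) :
    map (e ∘ₗ counit) f ∘ₗ (_root_.TensorProduct.assoc R C C M).toLinearMap ∘ₗ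
      map comul LinearMap.id ∘ₗ g =
      map e f ∘ₗ (_root_.TensorProduct.lid R _).symm.toLinearMap ∘ₗ g := by
  simp only [← LinearMap.comp_assoc]
  congr 1
  refine TensorProduct.ext' fun a m => ?_
  simpa [← (ℛ R a).eq, map_sum, sum_tmul] using
    congr(map e f $(sum_counit_tmul_map_eq ((TensorProduct.mk R C M).flip m) a (repr := ℛ R a)))

lemma sum_tmul_tmul_tmul_eq {a : C} {ι κ ν μ : Type*} (r : Repr R a ι)
    (u : ∀ i, Repr R (r.left i) κ) (v : ∀ i, Repr R (r.right i) ν)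
    (w : ∀ i j, Repr R ((u i).right j) μ) :
    ∑ i ∈ r.index, ∑ j ∈ (u i).index, ∑ l ∈ (v i).index,
      (u i).left j ⊗ₜ[R] ((u i).right j ⊗ₜ[R] ((v i).left l ⊗ₜ[R] (v i).right l)) =
    ∑ i ∈ r.index, ∑ j ∈ (u i).index, ∑ m ∈ (w i j).index,
      (u i).left j ⊗ₜ[R] ((w i j).left m ⊗ₜ[R] ((w i j).right m ⊗ₜ[R] r.right i)) := by
  set α := (_root_.TensorProduct.assoc R C C C).toLinearMap
  have hcomul₂ :
      ∑ i ∈ r.index, ∑ j ∈ (u i).index, (u i).left j ⊗ₜ[R] ((u i).right j ⊗ₜ[R] r.right i) =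
        comul.lTensor C (comul a) := by
    rw [← coassoc_apply]
    simp [← r.eq, ← (u _).eq, map_sum, sum_tmul]
  calc _ = (comul.lTensor C).lTensor C (comul.lTensor C (comul a)) := by
        simp [← hcomul₂, map_sum, ← (v _).eq, tmul_sum]
    _ = (α ∘ₗ comul.rTensor C).lTensor C (comul.lTensor C (comul a)) := by
        rw [← LinearMap.comp_apply (lTensor C _), ← LinearMap.comp_apply (lTensor C (α ∘ₗ _)),
          ← lTensor_comp, ← lTensor_comp, LinearMap.comp_assoc, coassoc]
    _ = _ := by simp [← hcomul₂, α, map_sum, ← (w _ _).eq, sum_tmul, tmul_sum]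

end Coalgebra

namespace HopfAlgebra

variable {R C : Type*} [CommSemiring R] [Semiring C] [HopfAlgebra R C]

lemma comul_left_inv :
    WithConv.toConv (map (antipode R) (antipode R) ∘ₗ (TensorProduct.comm R C C).toLinearMap ∘ₗ
      comul (R := R) (A := C)) * WithConv.toConv (comul (R := R) (A := C)) = 1 := by
  have hS : mul' R C ∘ₗ map (antipode R) LinearMap.id ∘ₗ comul =
      Algebra.linearMap R C ∘ₗ counit := by
    simpa only [LinearMap.rTensor_def] using mul_antipode_rTensor_comul (R := R) (A := C)
  apply WithConv.ext
  simp only [LinearMap.convMul_def, LinearMap.convOne_def, WithConv.ofConv_toConv, mul'_tensor]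
  simp only [coassoc_simps, hS, map_counit_comp_assoc_comp_map_comul]
  ext
  simp [Algebra.algebraMap_eq_smul_one, Algebra.TensorProduct.one_def, smul_tmul']

lemma comul_comp_antipode :
    comul ∘ₗ antipode R (A := C) =
      map (antipode R) (antipode R) ∘ₗ (TensorProduct.comm R C C).toLinearMap ∘ₗ comul :=
  congr(WithConv.ofConv $(left_inv_eq_right_inv comul_left_inv comul_right_inv)).symm

variable {Sinv : C →ₗ[R] C} (hSinv₁ : Sinv ∘ₗ antipode R = LinearMap.id)
  (hSinv₂ : antipode R ∘ₗ Sinv = LinearMap.id)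
include hSinv₁ hSinv₂

lemma comul_comp_antipodeInv :
    comul ∘ₗ Sinv = map Sinv Sinv ∘ₗ (TensorProduct.comm R C C).toLinearMap ∘ₗ comul := by
  have h := congr(map Sinv Sinv ∘ₗ $(comul_comp_antipode (R := R) (C := C)) ∘ₗ Sinv)
  simp only [← LinearMap.comp_assoc, ← map_comp, hSinv₁, map_id, LinearMap.id_comp] at h
  simp only [LinearMap.comp_assoc, hSinv₂, LinearMap.comp_id] at h
  calc comul ∘ₗ Sinv
      = (TensorProduct.comm R C C).toLinearMap ∘ₗ (TensorProduct.comm R C C).toLinearMap ∘ₗ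
          comul ∘ₗ Sinv := by rw [comm_comp_comm_assoc]
    _ = map Sinv Sinv ∘ₗ (TensorProduct.comm R C C).toLinearMap ∘ₗ comul := by
      rw [← h, ← LinearMap.comp_assoc, ← map_comp_comm_eq, LinearMap.comp_assoc]

lemma sum_antipodeInv_right_mul_left {a : C} {ι : Type*} (r : Coalgebra.Repr R a ι) :
    ∑ i ∈ r.index, Sinv (r.right i) * r.left i = algebraMap R C (counit a) := by
  apply Function.LeftInverse.injective (g := Sinv) (LinearMap.congr_fun hSinv₁)
  have hSSinv (x : C) : antipode R (Sinv x) = x := LinearMap.congr_fun hSinv₂ x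
  simp only [map_sum, antipode_mul_antidistrib, hSSinv, sum_antipode_mul_eq_algebraMap_counit r,
    Algebra.algebraMap_eq_smul_one, map_smul, antipode_one]

lemma sum_right_mul_antipodeInv_left {a : C} {ι : Type*} (r : Coalgebra.Repr R a ι) :
    ∑ i ∈ r.index, r.right i * Sinv (r.left i) = algebraMap R C (counit a) := by
  apply Function.LeftInverse.injective (g := Sinv) (LinearMap.congr_fun hSinv₁)
  have hSSinv (x : C) : antipode R (Sinv x) = x := LinearMap.congr_fun hSinv₂ x
  simp only [map_sum, antipode_mul_antidistrib, hSSinv, sum_mul_antipode_eq_algebraMap_counit r,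
    Algebra.algebraMap_eq_smul_one, map_smul, antipode_one]

end HopfAlgebra

lemma TensorProduct.ext_of_forall_dual {R M N : Type*} [Field R] [AddCommGroup M] [Module R M]
    [AddCommGroup N] [Module R N] [Module.Finite R M] [Module.Finite R N] {x y : M ⊗[R] N}
    (h : ∀ (f : Module.Dual R M) (g : Module.Dual R N),
      mul' R R (map f g x) = mul' R R (map f g y)) : x = y := by
  refine Module.eval_apply_injective R (LinearMap.ext fun φ => ?_)
  obtain ⟨ξ, rfl⟩ := (dualDistribEquiv R M N).surjective φ
  induction ξ with
  | zero => simp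
  | tmul f g =>
    have hfg : dualDistrib R M N (f ⊗ₜ g) = mul' R R ∘ₗ map f g := by ext; simp
    change dualDistrib R M N (f ⊗ₜ g) x = dualDistrib R M N (f ⊗ₜ g) y
    rw [hfg]
    exact h f g
  | add ξ η hξ hη => simp_all

lemma mul'_map_eval_eval {R M N : Type*} [Field R] [AddCommGroup M] [Module R M]
    [AddCommGroup N] [Module R N] [Module.Finite R M] [Module.Finite R N] (a : M) (b : N)
    (ξ : Module.Dual R M ⊗[R] Module.Dual R N) :
    mul' R R (map (Module.Dual.eval R M a) (Module.Dual.eval R N b) ξ) =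
      dualDistribEquiv R M N ξ (a ⊗ₜ b) := by
  change _ = dualDistrib R M N ξ (a ⊗ₜ b)
  induction ξ with
  | zero => simp
  | tmul f g => simp
  | add ξ η hξ hη => simp_all

section HopfPairing

open HopfAlgebra

variable {k K H} {σ : Module.Dual k K →ₗ[k] Module.Dual k H} {Sinv : H →ₗ[k] H}
  (pair_mul_left : ∀ f g : Module.Dual k K, σ (fconv k K f g) = fconv k H (σ f) (σ g))
  (pair_mul_right : ∀ (f : Module.Dual k K) (h h' : H),
    σ f (h * h') =
      (LinearMap.mul' k k ∘ₗ
        TensorProduct.map (LinearMap.applyₗ h ∘ₗ σ) (LinearMap.applyₗ h' ∘ₗ σ))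
        (dcomul k K f))
  (pair_one_right : ∀ f : Module.Dual k K, σ f 1 = f 1)
  (hSinv₁ : Sinv ∘ₗ antipode k = LinearMap.id) (hSinv₂ : antipode k ∘ₗ Sinv = LinearMap.id)

omit [Module.Finite k H]

lemma dual_comp_sigmaR (f : Module.Dual k K) : f ∘ₗ sigmaR k K H σ = σ f := by
  ext h
  simp [sigmaR]

lemma apply_sigmaR (f : Module.Dual k K) (h : H) : f (sigmaR k K H σ h) = σ f h :=
  congr($(dual_comp_sigmaR f) h)

include pair_one_right in
lemma sigmaR_one : sigmaR k K H σ 1 = 1 :=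
  Module.eval_apply_injective k (LinearMap.ext fun f => by simp [apply_sigmaR, pair_one_right])

include pair_one_right in
lemma sigmaR_algebraMap (c : k) : sigmaR k K H σ (algebraMap k H c) = algebraMap k K c := by
  rw [Algebra.algebraMap_eq_smul_one, map_smul, sigmaR_one pair_one_right,
    Algebra.algebraMap_eq_smul_one]

include pair_mul_right in
lemma sigmaR_mul (h h' : H) :
    sigmaR k K H σ (h * h') = sigmaR k K H σ h * sigmaR k K H σ h' := by
  have happly (x : H) : LinearMap.applyₗ x ∘ₗ σ = Module.Dual.eval k K (sigmaR k K H σ x) := by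
    ext f
    simp [apply_sigmaR]
  refine Module.eval_apply_injective k (LinearMap.ext fun f => ?_)
  simp only [Module.Dual.eval_apply, apply_sigmaR, pair_mul_right, happly, dcomul]
  rw [LinearMap.comp_apply, mul'_map_eval_eval, LinearMap.comp_apply, LinearEquiv.coe_coe,
    LinearEquiv.apply_symm_apply, LinearMap.dualMap_apply, mul'_apply]

include pair_mul_left in
lemma comul_sigmaR (h : H) :
    comul (sigmaR k K H σ h) = map (sigmaR k K H σ) (sigmaR k K H σ) (comul h) := by
  refine TensorProduct.ext_of_forall_dual fun f g => ?_
  calc mul' k k (map f g (comul (sigmaR k K H σ h)))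
      = σ (fconv k K f g) h := by rw [← apply_sigmaR]; rfl
    _ = mul' k k (map f g (map (sigmaR k K H σ) (sigmaR k K H σ) (comul h))) := by
      rw [pair_mul_left, fconv, ← dual_comp_sigmaR f, ← dual_comp_sigmaR g, map_comp]
      rfl

include pair_mul_left hSinv₁ hSinv₂ in
lemma comul_sigmaR_antipodeInv {h : H} {ι : Type*} (r : Repr k h ι) :
    comul (R := k) (sigmaR k K H σ (Sinv h)) = ∑ i ∈ r.index,
      sigmaR k K H σ (Sinv (r.right i)) ⊗ₜ sigmaR k K H σ (Sinv (r.left i)) := by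
  rw [comul_sigmaR pair_mul_left, ← LinearMap.comp_apply (comul (R := k)) Sinv,
    comul_comp_antipodeInv hSinv₁ hSinv₂]
  simp [← r.eq, map_sum]

lemma iotaH_eq_sum {h : H} {ι : Type*} (r : Repr k h ι) :
    iotaH k K H σ Sinv h = ∑ i ∈ r.index, sigmaR k K H σ (Sinv (r.right i)) ⊗ₜ r.left i := by
  simp [iotaH, ← r.eq, map_sum]

lemma piB_tmul (κ : K) (h : H) : piB k K H σ (κ ⊗ₜ h) = κ * sigmaR k K H σ h := rfl

omit [Module.Finite k K] in
lemma comulB_tmul (κ : K) (h : H) :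
    comulB k K H (κ ⊗ₜ h) = tensorTensorTensorComm k K K H H (comul κ ⊗ₜ comul h) := rfl

omit [Module.Finite k K] in
lemma mulB_tmul (κ κ' : K) (h h' : H) :
    mulB k K H ((κ ⊗ₜ h) ⊗ₜ (κ' ⊗ₜ h')) = (κ' * κ) ⊗ₜ (h * h') := rfl

omit [Module.Finite k K] in
lemma mulB_oneB (x : K ⊗[k] H) : mulB k K H (x ⊗ₜ oneB k K H) = x := by
  induction x with
  | zero => simp
  | tmul κ h => simp [oneB, mulB_tmul]
  | add x y hx hy => rw [add_tmul, map_add, hx, hy]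

include pair_mul_right pair_one_right hSinv₁ hSinv₂ in
lemma piB_iotaH (h : H) : piB k K H σ (iotaH k K H σ Sinv h) = algebraMap k K (counit h) := by
  rw [iotaH_eq_sum (ℛ k h), map_sum]
  simp only [piB_tmul, ← sigmaR_mul pair_mul_right, ← map_sum,
    sum_antipodeInv_right_mul_left hSinv₁ hSinv₂, sigmaR_algebraMap pair_one_right]

variable (σ) in
def coactB : K ⊗[k] H →ₗ[k] (K ⊗[k] H) ⊗[k] K :=
  TensorProduct.map .id (piB k K H σ) ∘ₗ comulB k K H

include pair_mul_left hSinv₁ hSinv₂ in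
lemma coactB_iotaH_eq_sum {h : H} {ι κ : Type*} (r : Repr k h ι) (u : ∀ i, Repr k (r.left i) κ) :
    coactB σ (iotaH k K H σ Sinv h) =
      ∑ i ∈ r.index, ∑ j ∈ (u i).index, (sigmaR k K H σ (Sinv (r.right i)) ⊗ₜ (u i).left j) ⊗ₜ
        piB k K H σ (iotaH k K H σ Sinv ((u i).right j)) := by
  set v := fun i => ℛ k (r.right i)
  set w := fun i j => ℛ k ((u i).right j)
  set Φ : H ⊗[k] (H ⊗[k] (H ⊗[k] H)) →ₗ[k] (K ⊗[k] H) ⊗[k] K :=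
    TensorProduct.map
        ((TensorProduct.comm k H K).toLinearMap ∘ₗ TensorProduct.map .id (sigmaR k K H σ ∘ₗ Sinv))
        (LinearMap.mul' k K ∘ₗ (TensorProduct.comm k K K).toLinearMap ∘ₗ
          TensorProduct.map (sigmaR k K H σ) (sigmaR k K H σ ∘ₗ Sinv))
      ∘ₗ (tensorTensorTensorComm k H H H H).toLinearMap
      ∘ₗ TensorProduct.map .id (TensorProduct.comm k H H).toLinearMap
      ∘ₗ (_root_.TensorProduct.assoc k H H (H ⊗[k] H)).symm.toLinearMap with hΦ
  have hΦ_tmul (p q s t : H) :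
      Φ (p ⊗ₜ (q ⊗ₜ (s ⊗ₜ t))) =
        (sigmaR k K H σ (Sinv t) ⊗ₜ p) ⊗ₜ (sigmaR k K H σ (Sinv s) * sigmaR k K H σ q) := by
    simp [hΦ]
  calc coactB σ (iotaH k K H σ Sinv h)
      = ∑ i ∈ r.index, ∑ j ∈ (u i).index, ∑ l ∈ (v i).index,
          Φ ((u i).left j ⊗ₜ ((u i).right j ⊗ₜ ((v i).left l ⊗ₜ (v i).right l))) := by
        rw [iotaH_eq_sum r]
        simp only [hΦ_tmul, coactB, map_sum, LinearMap.comp_apply, comulB_tmul,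
          comul_sigmaR_antipodeInv pair_mul_left hSinv₁ hSinv₂ (v _), ← (u _).eq]
        simp [sum_tmul, tmul_sum, piB_tmul]
    _ = ∑ i ∈ r.index, ∑ j ∈ (u i).index, ∑ m ∈ (w i j).index,
          Φ ((u i).left j ⊗ₜ ((w i j).left m ⊗ₜ ((w i j).right m ⊗ₜ r.right i))) := by
        simp only [← map_sum, sum_tmul_tmul_tmul_eq r u v w]
    _ = _ := by simp only [hΦ_tmul, iotaH_eq_sum (w _ _), map_sum, tmul_sum, piB_tmul]

include pair_mul_left pair_mul_right pair_one_right hSinv₁ hSinv₂ in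
lemma coactB_iotaH (h : H) : coactB σ (iotaH k K H σ Sinv h) = iotaH k K H σ Sinv h ⊗ₜ 1 := by
  rw [coactB_iotaH_eq_sum pair_mul_left hSinv₁ hSinv₂ (ℛ k h) (fun i => ℛ k _),
    iotaH_eq_sum (ℛ k h), sum_tmul]
  refine Finset.sum_congr rfl fun i _ => ?_
  have := congr(TensorProduct.map
    (TensorProduct.mk k K H (sigmaR k K H σ (Sinv ((ℛ k h).right i)))) (Algebra.linearMap k K)
    $(sum_tmul_counit_eq (ℛ k ((ℛ k h).left i))))
  simp only [map_sum, map_tmul, TensorProduct.mk_apply, Algebra.linearMap_apply, map_one] at this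
  simpa only [piB_iotaH pair_mul_right pair_one_right hSinv₁ hSinv₂] using this

variable (σ Sinv) in
def retraction : (K ⊗[k] H) ⊗[k] K →ₗ[k] K ⊗[k] H :=
  mulB k K H ∘ₗ TensorProduct.map
    (iotaH k K H σ Sinv ∘ₗ (TensorProduct.lid k H).toLinearMap ∘ₗ counit.rTensor H)
    ((TensorProduct.mk k K H).flip 1)

lemma retraction_tmul (κ : K) (h : H) (l : K) :
    retraction σ Sinv ((κ ⊗ₜ h) ⊗ₜ l) =
      counit (R := k) κ • mulB k K H (iotaH k K H σ Sinv h ⊗ₜ (l ⊗ₜ 1)) := by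
  simp [retraction, ← smul_tmul']

lemma retraction_tmul_one (y : K ⊗[k] H) :
    retraction σ Sinv (y ⊗ₜ 1) =
      iotaH k K H σ Sinv (TensorProduct.lid k H (counit.rTensor H y)) :=
  mulB_oneB _

lemma retraction_coactB_tmul (κ : K) (h : H) {ι : Type*} (r : Repr k h ι) :
    retraction σ Sinv (coactB σ (κ ⊗ₜ h)) =
      ∑ j ∈ r.index, mulB k K H (iotaH k K H σ Sinv (r.left j) ⊗ₜ
        ((κ * sigmaR k K H σ (r.right j)) ⊗ₜ 1)) := by
  conv_rhs => rw [← sum_counit_smul (ℛ k κ)]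
  simp [coactB, comulB_tmul, retraction_tmul, ← (ℛ k κ).eq, ← r.eq, sum_tmul, tmul_sum, map_sum,
    Finset.sum_mul, piB_tmul, ← smul_tmul']

include pair_mul_right pair_one_right hSinv₁ hSinv₂ in
lemma retraction_coactB (x : K ⊗[k] H) : retraction σ Sinv (coactB σ x) = x := by
  induction x with
  | zero => simp
  | add x y hx hy => rw [map_add, map_add, hx, hy]
  | tmul κ h =>
  set r := ℛ k h
  set w := fun j => ℛ k (r.left j)
  set v := fun j => ℛ k (r.right j)
  set Ψ : H ⊗[k] (H ⊗[k] H) →ₗ[k] K ⊗[k] H :=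
    (TensorProduct.comm k H K).toLinearMap ∘ₗ TensorProduct.map .id
      (LinearMap.mulLeft k κ ∘ₗ sigmaR k K H σ ∘ₗ LinearMap.mul' k H ∘ₗ
        (TensorProduct.comm k H H).toLinearMap ∘ₗ TensorProduct.map Sinv .id) with hΨ
  have hΨ_tmul (p q s : H) : Ψ (p ⊗ₜ (q ⊗ₜ s)) = (κ * sigmaR k K H σ (s * Sinv q)) ⊗ₜ p := by
    simp [hΨ]
  calc retraction σ Sinv (coactB σ (κ ⊗ₜ h))
      = ∑ j ∈ r.index, ∑ m ∈ (w j).index, Ψ ((w j).left m ⊗ₜ ((w j).right m ⊗ₜ r.right j)) := by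
        rw [retraction_coactB_tmul κ h r]
        refine Finset.sum_congr rfl fun j _ => ?_
        simp [iotaH_eq_sum (w j), hΨ_tmul, sum_tmul, map_sum, mulB_tmul,
          sigmaR_mul pair_mul_right, mul_assoc]
    _ = ∑ j ∈ r.index, ∑ m ∈ (v j).index, Ψ (r.left j ⊗ₜ ((v j).left m ⊗ₜ (v j).right m)) := by
        simp only [← map_sum, sum_tmul_tmul_eq r w v]
    _ = κ ⊗ₜ h := by
        have := congr((TensorProduct.comm k H K) (TensorProduct.map .id
          (LinearMap.mulLeft k κ ∘ₗ Algebra.linearMap k K) $(sum_tmul_counit_eq r)))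
        simp only [map_sum, map_tmul, LinearMap.id_apply, LinearMap.comp_apply,
          Algebra.linearMap_apply, LinearMap.mulLeft_apply, map_one, mul_one, comm_tmul] at this
        simp only [hΨ_tmul, ← sum_tmul, ← Finset.mul_sum, ← map_sum,
          sum_right_mul_antipodeInv_left hSinv₁ hSinv₂, sigmaR_algebraMap pair_one_right, this]

end HopfPairing

theorem iota_range_eq_coinvariants (σ : Module.Dual k K →ₗ[k] Module.Dual k H)
    (pair_mul_left : ∀ f g : Module.Dual k K, σ (fconv k K f g) = fconv k H (σ f) (σ g))
    (pair_mul_right : ∀ (f : Module.Dual k K) (h h' : H),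
      σ f (h * h') =
        (LinearMap.mul' k k ∘ₗ
          TensorProduct.map (LinearMap.applyₗ h ∘ₗ σ) (LinearMap.applyₗ h' ∘ₗ σ))
          (dcomul k K f))
    (pair_one_right : ∀ f : Module.Dual k K, σ f 1 = f 1)
    (Sinv : H →ₗ[k] H)
    (hSinv₁ : Sinv ∘ₗ HopfAlgebra.antipode (R := k) = LinearMap.id)
    (hSinv₂ : HopfAlgebra.antipode (R := k) ∘ₗ Sinv = LinearMap.id) :
    ∀ x : K ⊗[k] H,
      x ∈ LinearMap.range (iotaH k K H σ Sinv) ↔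
        (TensorProduct.map .id (piB k K H σ) ∘ₗ comulB k K H) x = x ⊗ₜ (1 : K) := by
  intro x
  constructor
  · rintro ⟨h, rfl⟩
    exact coactB_iotaH pair_mul_left pair_mul_right pair_one_right hSinv₁ hSinv₂ h
  · intro hx
    rw [← retraction_coactB pair_mul_right pair_one_right hSinv₁ hSinv₂ x,
      show coactB σ x = x ⊗ₜ 1 from hx, retraction_tmul_one]
    exact LinearMap.mem_range_self _ _
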